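/- Let R be a nonempty closed subset of the nonnegative reals satisfying the 4-values condition. A regular R-graph G = (G; E, δ) is metric if and only if every cycle of G is metric. -/

import Mathlib

/-- For `a, b ∈ R`, `a ⊕ b := sup {x ∈ R | x ≤ a + b}`. -/
noncomputable def oplus (R : Set ℝ) (a b : ℝ) : ℝ :=
  sSup {x | x ∈ R ∧ x ≤ a + b}

/-- A triple `(a,b,c)` is metric if each entry is at most the sum of the other two. -/
def IsMetricTriple (a b c : ℝ) : Prop :=
  a ≤ b + c ∧ b ≤ a + c ∧ c ≤ a + b

/-- The 4-values condition. -/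
def FourValues (S : Set ℝ) : Prop :=
  ∀ a ∈ S, ∀ b ∈ S, ∀ c ∈ S, ∀ d ∈ S,
    max b (max c d) ≤ a → a ≤ b + c + d →
      ∀ x ∈ S, IsMetricTriple a b x → IsMetricTriple c d x →
        ∃ y ∈ S, IsMetricTriple a d y ∧ IsMetricTriple c b y

section OplusLemmas
variable {R : Set ℝ} {a b c z : ℝ}

lemma op_bdd (R : Set ℝ) (a b : ℝ) : BddAbove {x | x ∈ R ∧ x ≤ a + b} :=
  ⟨a + b, fun _ h => h.2⟩

lemma op_nonneg (hpos : ∀ x ∈ R, 0 ≤ x) (a b : ℝ) : 0 ≤ oplus R a b := by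
  rcases Set.eq_empty_or_nonempty {x | x ∈ R ∧ x ≤ a + b} with h | ⟨z, hz⟩
  · simp [oplus, h]
  · exact le_trans (hpos z hz.1) (le_csSup (op_bdd R a b) hz)

lemma le_op (hz : z ∈ R) (h : z ≤ a + b) : z ≤ oplus R a b :=
  le_csSup (op_bdd R a b) ⟨hz, h⟩

lemma op_le_add (h : 0 ≤ a + b) : oplus R a b ≤ a + b := by
  rcases Set.eq_empty_or_nonempty {x | x ∈ R ∧ x ≤ a + b} with he | hne
  · simp [oplus, he, h]
  · exact csSup_le hne fun x hx => hx.2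

lemma op_comm (R : Set ℝ) (a b : ℝ) : oplus R a b = oplus R b a := by
  simp [oplus, add_comm]

lemma op_mem (hcl : IsClosed R) (hpos : ∀ x ∈ R, 0 ≤ x) (ha : a ∈ R) (hb : 0 ≤ b) :
    oplus R a b ∈ R := by
  have hS : IsClosed {x | x ∈ R ∧ x ≤ a + b} := by
    have : {x | x ∈ R ∧ x ≤ a + b} = R ∩ Set.Iic (a + b) := rfl
    rw [this]; exact hcl.inter isClosed_Iic
  exact (hS.csSup_mem ⟨a, ha, by linarith⟩ (op_bdd R a b)).1

lemma le_op_left (ha : a ∈ R) (hb : 0 ≤ b) : a ≤ oplus R a b :=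
  le_op ha (by linarith)

lemma le_op_right (hb : b ∈ R) (ha : 0 ≤ a) : b ≤ oplus R a b :=
  le_op hb (by linarith)

lemma op_mono_right (hpos : ∀ x ∈ R, 0 ≤ x) (h : b ≤ c) (a : ℝ) :
    oplus R a b ≤ oplus R a c := by
  rcases Set.eq_empty_or_nonempty {x | x ∈ R ∧ x ≤ a + b} with he | hne
  · rw [oplus, he]; simpa using op_nonneg hpos a c
  · exact csSup_le_csSup (op_bdd R a c) hne fun x hx => ⟨hx.1, by linarith [hx.2]⟩

lemma op_mono_left (hpos : ∀ x ∈ R, 0 ≤ x) (h : a ≤ c) (b : ℝ) :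
    oplus R a b ≤ oplus R c b := by
  rw [op_comm R a b, op_comm R c b]; exact op_mono_right hpos h b

lemma op_zero_right (hpos : ∀ x ∈ R, 0 ≤ x) (ha : a ∈ R) : oplus R a 0 = a := by
  have h1 : oplus R a 0 ≤ a + 0 := op_le_add (by have := hpos a ha; linarith)
  have h2 := le_op_left ha (le_refl (0:ℝ))
  linarith

lemma op_zero_left (hpos : ∀ x ∈ R, 0 ≤ x) (ha : a ∈ R) : oplus R 0 a = a := by
  rw [op_comm]; exact op_zero_right hpos ha

lemma op_zero_zero (hpos : ∀ x ∈ R, 0 ≤ x) : oplus R (0:ℝ) 0 = 0 := by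
  have h1 : oplus R (0:ℝ) 0 ≤ 0 + 0 := op_le_add (by norm_num)
  have h2 := op_nonneg hpos (0:ℝ) 0
  linarith

end OplusLemmas
section Assoc
variable {R : Set ℝ} {a b c : ℝ}

lemma op_assoc_le (hcl : IsClosed R) (hpos : ∀ x ∈ R, 0 ≤ x) (h4 : FourValues R)
    (ha : a ∈ R) (hb : b ∈ R) (hc : c ∈ R) :
    oplus R (oplus R a b) c ≤ oplus R a (oplus R b c) := by
  have ha0 := hpos a ha
  have hb0 := hpos b hb
  have hc0 := hpos c hc
  have hab : oplus R a b ∈ R := op_mem hcl hpos ha hb0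
  have hab_le : oplus R a b ≤ a + b := op_le_add (by linarith)
  have ha_le : a ≤ oplus R a b := le_op_left ha hb0
  have hb_le : b ≤ oplus R a b := le_op_right hb ha0
  set u := oplus R (oplus R a b) c with hu_def
  have hu : u ∈ R := op_mem hcl hpos hab hc0
  have hu_le : u ≤ oplus R a b + c := op_le_add (by linarith [hpos _ hab])
  have hab_le_u : oplus R a b ≤ u := le_op_left hab hc0
  have hc_le_u : c ≤ u := le_op_right hc (hpos _ hab)
  obtain ⟨y, hy, ⟨h1, _, h3⟩, ⟨_, _, h6⟩⟩ :=
    h4 u hu c hc b hb a ha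
      (by simp only [max_le_iff]; exact ⟨hc_le_u, le_trans hb_le hab_le_u, le_trans ha_le hab_le_u⟩)
      (by linarith)
      (oplus R a b) hab
      ⟨by linarith, by linarith [hpos _ hab], by linarith⟩
      ⟨by linarith, by linarith, by linarith⟩
  -- h1 : u ≤ a + y, h6 : y ≤ b + c
  have hy_le : y ≤ oplus R b c := le_op hy h6
  exact le_op hu (by linarith)

lemma op_assoc (hcl : IsClosed R) (hpos : ∀ x ∈ R, 0 ≤ x) (h4 : FourValues R)
    (ha : a ∈ R) (hb : b ∈ R) (hc : c ∈ R) :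
    oplus R (oplus R a b) c = oplus R a (oplus R b c) := by
  have h1 := op_assoc_le hcl hpos h4 ha hb hc
  have h2 := op_assoc_le hcl hpos h4 hb hc ha
  have h3 := op_assoc_le hcl hpos h4 hc ha hb
  rw [op_comm R (oplus R b c) a, op_comm R b (oplus R c a)] at h2
  rw [op_comm R c (oplus R a b)] at h3
  exact le_antisymm h1 (le_trans h2 h3)

end Assoc
/-- The `⊕`-sum `a₀ ⊕ (a₁ ⊕ (⋯ ⊕ aₙ))` of a list of reals. -/
noncomputable def oplusList (R : Set ℝ) : List ℝ → ℝ
  | [] => 0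
  | [a] => a
  | a :: b :: l => oplus R a (oplusList R (b :: l))

section OlistLemmas
variable {R : Set ℝ} {a : ℝ}

lemma olist_nonneg (hpos : ∀ x ∈ R, 0 ≤ x) :
    ∀ l : List ℝ, (∀ x ∈ l, 0 ≤ x) → 0 ≤ oplusList R l
  | [], _ => le_refl 0
  | [a], h => h a (by simp)
  | a :: b :: l, _ => op_nonneg hpos _ _

lemma olist_mem (hcl : IsClosed R) (hpos : ∀ x ∈ R, 0 ≤ x) :
    ∀ l : List ℝ, (∀ x ∈ l, x ∈ R) → l ≠ [] → oplusList R l ∈ R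
  | [], _, h => absurd rfl h
  | [a], h, _ => h a (by simp)
  | a :: b :: l, h, _ => by
    have htail : ∀ x ∈ b :: l, x ∈ R := fun x hx => h x (by simp [hx])
    exact op_mem hcl hpos (h a (by simp))
      (olist_nonneg hpos _ (fun x hx => hpos x (htail x hx)))

lemma olist_cons (hpos : ∀ x ∈ R, 0 ≤ x) (ha : a ∈ R) (l : List ℝ) :
    oplusList R (a :: l) = oplus R a (oplusList R l) := by
  cases l with
  | nil => exact (op_zero_right hpos ha).symm
  | cons b t => rfl

lemma olist_append (hcl : IsClosed R) (hpos : ∀ x ∈ R, 0 ≤ x) (h4 : FourValues R) :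
    ∀ l₁ l₂ : List ℝ, (∀ x ∈ l₁, x ∈ R) → (∀ x ∈ l₂, x ∈ R) →
      oplusList R (l₁ ++ l₂) = oplus R (oplusList R l₁) (oplusList R l₂) := by
  intro l₁ l₂ h1 h2
  rcases eq_or_ne l₂ [] with rfl | hl2
  · rcases eq_or_ne l₁ [] with rfl | hl1
    · rw [List.append_nil]; exact (op_zero_zero hpos).symm
    · rw [List.append_nil]; exact (op_zero_right hpos (olist_mem hcl hpos l₁ h1 hl1)).symm
  · induction l₁ with
    | nil =>
      rw [List.nil_append]
      exact (op_zero_left hpos (olist_mem hcl hpos l₂ h2 hl2)).symm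
    | cons a t ih =>
      have ha : a ∈ R := h1 a (by simp)
      have ht : ∀ x ∈ t, x ∈ R := fun x hx => h1 x (by simp [hx])
      rcases eq_or_ne t [] with rfl | hte
      · rw [List.singleton_append, olist_cons hpos ha]
        rfl
      · rw [List.cons_append, olist_cons hpos ha, ih ht,
          olist_cons hpos ha, op_assoc hcl hpos h4 ha (olist_mem hcl hpos t ht hte)
            (olist_mem hcl hpos l₂ h2 hl2)]

lemma olist_sublist (hcl : IsClosed R) (hpos : ∀ x ∈ R, 0 ≤ x)
    {l₁ l₂ : List ℝ} (h : l₁.Sublist l₂) :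
    (∀ x ∈ l₂, x ∈ R) → oplusList R l₁ ≤ oplusList R l₂ := by
  induction h with
  | slnil => intro _; exact le_refl _
  | @cons l₁ l₂ a h ih =>
    intro hmem
    have ha : a ∈ R := hmem a (by simp)
    have h2 : ∀ x ∈ l₂, x ∈ R := fun x hx => hmem x (by simp [hx])
    refine le_trans (ih h2) ?_
    rcases eq_or_ne l₂ [] with rfl | hl2
    · simpa [oplusList] using hpos a ha
    · rw [olist_cons hpos ha]
      exact le_op_right (olist_mem hcl hpos l₂ h2 hl2) (hpos a ha)
  | @cons_cons l₁ l₂ a h ih =>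
    intro hmem
    have ha : a ∈ R := hmem a (by simp)
    have h2 : ∀ x ∈ l₂, x ∈ R := fun x hx => hmem x (by simp [hx])
    rw [olist_cons hpos ha, olist_cons hpos ha]
    exact op_mono_right hpos (ih h2) a

lemma olist_middle (hcl : IsClosed R) (hpos : ∀ x ∈ R, 0 ≤ x) (h4 : FourValues R)
    {A B C : List ℝ} {x : ℝ} (hA : ∀ y ∈ A, y ∈ R) (hB : ∀ y ∈ B, y ∈ R)
    (hC : ∀ y ∈ C, y ∈ R) (hx : x ∈ R) (hxB : x ≤ oplusList R B) :
    oplusList R (A ++ x :: C) ≤ oplusList R (A ++ (B ++ C)) := by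
  have hxC : ∀ y ∈ x :: C, y ∈ R := by
    intro y hy; rcases List.mem_cons.1 hy with rfl | hy; exacts [hx, hC y hy]
  have hBC : ∀ y ∈ B ++ C, y ∈ R := by
    intro y hy; rcases List.mem_append.1 hy with hy | hy; exacts [hB y hy, hC y hy]
  rw [olist_append hcl hpos h4 A (x :: C) hA hxC,
    olist_append hcl hpos h4 A (B ++ C) hA hBC,
    olist_cons hpos hx, olist_append hcl hpos h4 B C hB hC]
  exact op_mono_right hpos (op_mono_left hpos hxB _) _
lemma range_split_map {α : Type*} (f : ℕ → α) (a b c : ℕ) :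
    (List.range (a + (b + c))).map f =
      ((List.range a).map f) ++ (((List.range b).map fun j => f (a + j)) ++
        ((List.range c).map fun i => f (a + b + i))) := by
  rw [List.range_add, List.map_append, List.map_map, List.range_add, List.map_append,
    List.map_map]
  refine congrArg₂ _ rfl (congrArg₂ _ rfl ?_)
  apply List.map_congr_left
  intro i _
  show f (a + (b + i)) = f (a + b + i)
  rw [Nat.add_assoc]

/-- The `⊕`-length `δ(W)` of a walk `W`. -/
noncomputable def walkDelta (R : Set ℝ) {V : Type} {G : SimpleGraph V} (δ : V → V → ℝ)
    {a b : V} (w : G.Walk a b) : ℝ :=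
  oplusList R (w.darts.map fun d => δ d.toProd.1 d.toProd.2)

/-- `d(a,b) = inf {δ(W) | W a walk from a to b}`. -/
noncomputable def gdist (R : Set ℝ) {V : Type} (G : SimpleGraph V) (δ : V → V → ℝ)
    (a b : V) : ℝ :=
  sInf {x | ∃ w : G.Walk a b, x = walkDelta R δ w}

/-- An `R`-graph: a simple graph together with a symmetric edge-distance function
with values in `R` which is positive on edges. -/
def IsRGraph (R : Set ℝ) {V : Type} (G : SimpleGraph V) (δ : V → V → ℝ) : Prop :=
  ∀ x y : V, G.Adj x y → δ x y ∈ R ∧ 0 < δ x y ∧ δ x y = δ y x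

section WalkLemmas
variable {R : Set ℝ} {V : Type} {G : SimpleGraph V} {δ : V → V → ℝ}

lemma walk_darts_eq {a b : V} (w : G.Walk a b) :
    (w.darts.map fun d => δ d.toProd.1 d.toProd.2) =
      (List.range w.length).map fun k => δ (w.getVert k) (w.getVert (k + 1)) := by
  induction w with
  | nil => simp
  | @cons u x b h p ih =>
    rw [SimpleGraph.Walk.darts_cons, SimpleGraph.Walk.length_cons, List.map_cons,
      List.range_succ_eq_map, List.map_cons, List.map_map]
    refine List.cons_eq_cons.2 ⟨?_, ?_⟩
    · simp [SimpleGraph.Walk.getVert_zero, SimpleGraph.Walk.getVert_cons_succ]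
    · rw [ih]
      apply List.map_congr_left
      intro k _
      simp [SimpleGraph.Walk.getVert_cons_succ, Nat.succ_eq_add_one]

lemma exists_walk (δ : V → V → ℝ) :
    ∀ (m : ℕ) (g : ℕ → V), (∀ k, k < m → G.Adj (g k) (g (k + 1))) →
      ∃ w : G.Walk (g 0) (g m),
        (w.darts.map fun d => δ d.toProd.1 d.toProd.2) =
          (List.range m).map fun k => δ (g k) (g (k + 1)) := by
  intro m
  induction m with
  | zero => intro g _; exact ⟨SimpleGraph.Walk.nil, by simp⟩
  | succ m ih =>
    intro g hadj
    obtain ⟨w', hw'⟩ := ih (fun k => g (k + 1)) (fun k hk => hadj (k + 1) (by omega))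
    refine ⟨SimpleGraph.Walk.cons (hadj 0 (by omega)) w', ?_⟩
    rw [SimpleGraph.Walk.darts_cons, List.map_cons, List.range_succ_eq_map, List.map_cons,
      List.map_map, hw']
    refine List.cons_eq_cons.2 ⟨rfl, ?_⟩
    apply List.map_congr_left
    intro k _
    simp [Nat.succ_eq_add_one]

lemma walkDelta_entries_mem (hG : IsRGraph R G δ) {a b : V} (w : G.Walk a b) :
    ∀ x ∈ (w.darts.map fun d => δ d.toProd.1 d.toProd.2), x ∈ R := by
  intro x hx
  obtain ⟨d, hd, rfl⟩ := List.mem_map.1 hx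
  exact (hG _ _ d.adj).1

lemma walkDelta_nonneg (hpos : ∀ x ∈ R, 0 ≤ x) (hG : IsRGraph R G δ) {a b : V}
    (w : G.Walk a b) : 0 ≤ walkDelta R δ w :=
  olist_nonneg hpos _ fun x hx => hpos x (walkDelta_entries_mem hG w x hx)

lemma gdist_bddBelow (hpos : ∀ x ∈ R, 0 ≤ x) (hG : IsRGraph R G δ) (a b : V) :
    BddBelow {x | ∃ w : G.Walk a b, x = walkDelta R δ w} := by
  refine ⟨0, fun x hx => ?_⟩
  obtain ⟨w, rfl⟩ := hx
  exact walkDelta_nonneg hpos hG w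

lemma walkDelta_single {a b : V} (hadj : G.Adj a b) :
    walkDelta R δ (SimpleGraph.Walk.cons hadj SimpleGraph.Walk.nil) = δ a b := by
  simp [walkDelta, oplusList]

end WalkLemmas
/-- An `R`-graph is regular if `d(a,b) > 0` for all distinct `a`, `b`. -/
def RegularRGraph (R : Set ℝ) {V : Type} (G : SimpleGraph V) (δ : V → V → ℝ) : Prop :=
  ∀ a b : V, a ≠ b → 0 < gdist R G δ a b

/-- An `R`-graph is metric if `δ(a,b) = d(a,b)` for every edge `{a,b}`. -/
def MetricRGraph (R : Set ℝ) {V : Type} (G : SimpleGraph V) (δ : V → V → ℝ) : Prop :=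
  ∀ a b : V, G.Adj a b → δ a b = gdist R G δ a b

/-- A cycle of the graph `G`: an injective map from `ZMod n` (`n ≥ 3`) such that
images are adjacent exactly when the indices are consecutive (no chords). -/
def IsInducedCycle {V : Type} (G : SimpleGraph V) {n : ℕ} (f : ZMod n → V) : Prop :=
  3 ≤ n ∧ Function.Injective f ∧
    ∀ i j : ZMod n, G.Adj (f i) (f j) ↔ (j = i + 1 ∨ i = j + 1)

/-- A cycle is metric if each of its edge distances is at most the `⊕`-sum of the
distances over the remaining edges of the cycle. -/
def MetricCycle (R : Set ℝ) {V : Type} (δ : V → V → ℝ) {n : ℕ} (f : ZMod n → V) : Prop :=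
  ∀ i : ZMod n,
    δ (f i) (f (i + 1)) ≤
      oplusList R ((List.range (n - 1)).map fun k =>
        δ (f (i + 1 + (k : ZMod n))) (f (i + 1 + (k : ZMod n) + 1)))

section KeyLemma
variable {R : Set ℝ} {V : Type} {G : SimpleGraph V} {δ : V → V → ℝ}

lemma key_chain (hcl : IsClosed R) (hpos : ∀ x ∈ R, 0 ≤ x) (h4 : FourValues R)
    (hG : IsRGraph R G δ)
    (hcyc : ∀ (n : ℕ) (f : ZMod n → V), IsInducedCycle G f → MetricCycle R δ f) :
    ∀ n : ℕ, ∀ g : ℕ → V, (∀ k, k < n → G.Adj (g k) (g (k + 1))) → G.Adj (g 0) (g n) →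
      δ (g 0) (g n) ≤ oplusList R ((List.range n).map fun k => δ (g k) (g (k + 1))) := by
  intro n
  induction n using Nat.strong_induction_on with
  | _ n IH =>
  intro g hadj hend
  set T : ℕ → ℝ := fun k => δ (g k) (g (k + 1)) with hTdef
  have hTmem : ∀ x ∈ (List.range n).map T, x ∈ R := by
    intro x hx
    obtain ⟨j, hj, rfl⟩ := List.mem_map.1 hx
    exact (hG _ _ (hadj j (List.mem_range.1 hj))).1
  match n, IH, hadj, hend, hTmem with
  | 0, IH, hadj, hend, hTmem => exact absurd hend (G.irrefl)
  | 1, IH, hadj, hend, hTmem => simp [oplusList, T]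
  | (m+2), IH, hadj, hend, hTmem => ?_
  set n := m + 2
  have hn2 : 2 ≤ n := by omega
  by_cases hdup : ∃ k l : ℕ, k < l ∧ l ≤ n ∧ g k = g l
  · -- remove a loop
    obtain ⟨k, l, hkl, hln, hgkl⟩ := hdup
    have hne0n : ¬(k = 0 ∧ l = n) := by
      rintro ⟨rfl, rfl⟩; exact hend.ne hgkl
    have hmn : l - k < n := by rcases not_and_or.1 hne0n with h | h <;> omega
    set m' := l - k with hm'def
    set n' := n - m' with hn'def
    set g' : ℕ → V := fun j => if j ≤ k then g j else g (j + m') with hg'def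
    have g'le : ∀ j, j ≤ k → g' j = g j := fun j hj => by rw [hg'def]; exact if_pos hj
    have g'gt : ∀ j, k < j → g' j = g (j + m') := fun j hj => by
      rw [hg'def]; exact if_neg (by omega)
    have hg'0 : g' 0 = g 0 := g'le 0 (Nat.zero_le k)
    have hg'n : g' n' = g n := by
      by_cases h : n' ≤ k
      · have h1 : l = n := by omega
        have h2 : n' = k := by omega
        rw [g'le n' h, h2, hgkl, h1]
      · rw [g'gt n' (by omega)]; congr 1; omega
    have chain' : ∀ j, j < n' → G.Adj (g' j) (g' (j + 1)) := by
      intro j hj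
      rcases lt_trichotomy j k with h | h | h
      · rw [g'le j (by omega), g'le (j + 1) (by omega)]
        exact hadj j (by omega)
      · subst h
        have hln' : l < n := by omega
        rw [g'le j le_rfl, hgkl, g'gt (j + 1) (by omega),
          show j + 1 + m' = l + 1 by omega]
        exact hadj l hln'
      · rw [g'gt j h, g'gt (j + 1) (by omega), show j + 1 + m' = j + m' + 1 by omega]
        exact hadj (j + m') (by omega)
    have hrec := IH n' (by omega) g' chain' (by rw [hg'0, hg'n]; exact hend)
    rw [hg'0, hg'n] at hrec
    have hnew : ((List.range n').map fun j => δ (g' j) (g' (j + 1))) =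
        ((List.range k).map T) ++ ((List.range (n - l)).map fun i => T (l + i)) := by
      rw [show n' = k + (n - l) by omega, List.range_add, List.map_append, List.map_map]
      congr 1
      · apply List.map_congr_left
        intro j hj
        have hj' := List.mem_range.1 hj
        rw [g'le j (by omega), g'le (j + 1) (by omega)]
      · apply List.map_congr_left
        intro i hi
        have hi' := List.mem_range.1 hi
        show δ (g' (k + i)) (g' (k + i + 1)) = T (l + i)
        rcases Nat.eq_zero_or_pos i with rfl | hipos
        · rw [show k + 0 = k from rfl, g'le k le_rfl, hgkl, g'gt (k + 1) (by omega),
            show k + 1 + m' = l + 0 + 1 by omega]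
          rfl
        · rw [g'gt (k + i) (by omega), g'gt (k + i + 1) (by omega),
            show k + i + m' = l + i by omega, show k + i + 1 + m' = l + i + 1 by omega]
    have hold : ((List.range n).map T) =
        ((List.range k).map T) ++
          (((List.range (l - k)).map fun j => T (k + j)) ++
            ((List.range (n - l)).map fun i => T (l + i))) := by
      conv_lhs => rw [show n = k + ((l - k) + (n - l)) by omega]
      rw [range_split_map]
      refine congrArg₂ _ rfl (congrArg₂ _ rfl ?_)
      apply List.map_congr_left
      intro i _
      show T (k + (l - k) + i) = T (l + i)
      congr 1
      omega
    have hsub : List.Sublist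
        (((List.range k).map T) ++ ((List.range (n - l)).map fun i => T (l + i)))
        ((List.range n).map T) := by
      rw [hold]
      exact ((List.sublist_append_right _ _)).append_left _
    calc δ (g 0) (g n) ≤ _ := hrec
      _ = _ := by rw [hnew]
      _ ≤ oplusList R ((List.range n).map T) := olist_sublist hcl hpos hsub hTmem
  · by_cases hch : ∃ k l : ℕ, k + 2 ≤ l ∧ l ≤ n ∧ (k ≠ 0 ∨ l ≠ n) ∧ G.Adj (g k) (g l)
    · -- shortcut a chord
      obtain ⟨k, l, hkl, hln, hne0n, hchord⟩ := hch
      have hmn : l - k < n := by rcases hne0n with h | h <;> omega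
      set m' := l - k - 1 with hm'def
      set n' := n - m' with hn'def
      set g' : ℕ → V := fun j => if j ≤ k then g j else g (j + m') with hg'def
      have g'le : ∀ j, j ≤ k → g' j = g j := fun j hj => by rw [hg'def]; exact if_pos hj
      have g'gt : ∀ j, k < j → g' j = g (j + m') := fun j hj => by
        rw [hg'def]; exact if_neg (by omega)
      have hg'0 : g' 0 = g 0 := g'le 0 (Nat.zero_le k)
      have hg'n : g' n' = g n := by
        rw [g'gt n' (by omega)]; congr 1; omega
      have chain' : ∀ j, j < n' → G.Adj (g' j) (g' (j + 1)) := by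
        intro j hj
        rcases lt_trichotomy j k with h | h | h
        · rw [g'le j (by omega), g'le (j + 1) (by omega)]
          exact hadj j (by omega)
        · subst h
          rw [g'le j le_rfl, g'gt (j + 1) (by omega), show j + 1 + m' = l by omega]
          exact hchord
        · rw [g'gt j h, g'gt (j + 1) (by omega), show j + 1 + m' = j + m' + 1 by omega]
          exact hadj (j + m') (by omega)
      have hrec := IH n' (by omega) g' chain' (by rw [hg'0, hg'n]; exact hend)
      rw [hg'0, hg'n] at hrec
      -- inner: bound the chord by the replaced segment
      have hinner := IH (l - k) (by omega) (fun j => g (k + j))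
        (fun j hj => by
          show G.Adj (g (k + j)) (g (k + (j + 1)))
          rw [show k + (j + 1) = k + j + 1 by omega]
          exact hadj (k + j) (by omega))
        (by
          show G.Adj (g (k + 0)) (g (k + (l - k)))
          rw [show k + 0 = k by omega, show k + (l - k) = l by omega]
          exact hchord)
      beta_reduce at hinner
      rw [show k + (l - k) = l by omega] at hinner
      rw [show k + 0 = k by omega] at hinner
      -- hinner : δ (g k) (g l) ≤ oplusList R ((range (l-k)).map fun j => δ (g (k+j)) (g (k+j+1)))
      have hnew : ((List.range n').map fun j => δ (g' j) (g' (j + 1))) =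
          ((List.range k).map T) ++
            (δ (g k) (g l) :: ((List.range (n - l)).map fun i => T (l + i))) := by
        rw [show n' = k + ((n - l) + 1) by omega, List.range_add, List.map_append,
          List.map_map, List.range_succ_eq_map, List.map_cons, List.map_map]
        congr 1
        · apply List.map_congr_left
          intro j hj
          have hj' := List.mem_range.1 hj
          rw [g'le j (by omega), g'le (j + 1) (by omega)]
        · refine List.cons_eq_cons.2 ⟨?_, ?_⟩
          · show δ (g' (k + 0)) (g' (k + 0 + 1)) = δ (g k) (g l)
            rw [show k + 0 = k from rfl, g'le k le_rfl, g'gt (k + 1) (by omega),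
              show k + 1 + m' = l by omega]
          · apply List.map_congr_left
            intro i hi
            have hi' := List.mem_range.1 hi
            show δ (g' (k + (i + 1))) (g' (k + (i + 1) + 1)) = T (l + i)
            rw [g'gt (k + (i + 1)) (by omega), g'gt (k + (i + 1) + 1) (by omega),
              show k + (i + 1) + m' = l + i by omega,
              show k + (i + 1) + 1 + m' = l + i + 1 by omega]
      have hold : ((List.range n).map T) =
          ((List.range k).map T) ++
            (((List.range (l - k)).map fun j => T (k + j)) ++
              ((List.range (n - l)).map fun i => T (l + i))) := by
        conv_lhs => rw [show n = k + ((l - k) + (n - l)) by omega]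
        rw [range_split_map]
        refine congrArg₂ _ rfl (congrArg₂ _ rfl ?_)
        apply List.map_congr_left
        intro i _
        show T (k + (l - k) + i) = T (l + i)
        congr 1
        omega
      have hmemA : ∀ x ∈ (List.range k).map T, x ∈ R := by
        intro x hx
        obtain ⟨j, hj, rfl⟩ := List.mem_map.1 hx
        exact (hG _ _ (hadj j (by have := List.mem_range.1 hj; omega))).1
      have hmemB : ∀ x ∈ (List.range (l - k)).map fun j => T (k + j), x ∈ R := by
        intro x hx
        obtain ⟨j, hj, rfl⟩ := List.mem_map.1 hx
        exact (hG _ _ (hadj (k + j) (by have := List.mem_range.1 hj; omega))).1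
      have hmemC : ∀ x ∈ (List.range (n - l)).map fun i => T (l + i), x ∈ R := by
        intro x hx
        obtain ⟨i, hi, rfl⟩ := List.mem_map.1 hx
        exact (hG _ _ (hadj (l + i) (by have := List.mem_range.1 hi; omega))).1
      have hxB : δ (g k) (g l) ≤ oplusList R ((List.range (l - k)).map fun j => T (k + j)) :=
        hinner
      calc δ (g 0) (g n) ≤ _ := hrec
        _ = _ := by rw [hnew]
        _ ≤ oplusList R ((List.range n).map T) := by
            rw [hold]
            exact olist_middle hcl hpos h4 hmemA hmemB hmemC (hG _ _ hchord).1 hxB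
    · -- no duplicate vertices, no chords: an induced cycle
      push_neg at hdup
      haveI : NeZero (n + 1) := ⟨Nat.succ_ne_zero n⟩
      haveI : Fact (1 < n + 1) := ⟨by omega⟩
      set f : ZMod (n + 1) → V := fun x => g x.val with hfdef
      have hfg : ∀ k : ℕ, k ≤ n → f (k : ZMod (n + 1)) = g k := by
        intro k hk
        rw [hfdef]
        show g ((k : ZMod (n + 1)).val) = g k
        rw [ZMod.val_cast_of_lt (by omega)]
      have hvle : ∀ x : ZMod (n + 1), x.val ≤ n := fun x => by
        have := ZMod.val_lt x; omega
      have hinj : Function.Injective f := by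
        intro x y hxy
        rw [hfdef] at hxy
        apply ZMod.val_injective
        by_contra hne
        rcases Nat.lt_or_ge x.val y.val with h | h
        · rcases Nat.eq_or_lt_of_le (Nat.succ_le_of_lt h) with h' | h'
          all_goals exact hdup x.val y.val h (hvle y) hxy
        · have h' : y.val < x.val := by omega
          exact hdup y.val x.val h' (hvle x) hxy.symm
      have hconsec : ∀ i : ZMod (n + 1), G.Adj (f i) (f (i + 1)) := by
        intro i
        rcases Nat.lt_or_ge i.val n with h | h
        · have hv : (i + 1).val = i.val + 1 := by
            rw [ZMod.val_add, ZMod.val_one]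
            exact Nat.mod_eq_of_lt (by omega)
          rw [hfdef]
          show G.Adj (g i.val) (g (i + 1).val)
          rw [hv]
          exact hadj i.val h
        · have hin : i.val = n := by have := hvle i; omega
          have hv : (i + 1).val = 0 := by
            rw [ZMod.val_add, ZMod.val_one, hin]
            simp
          rw [hfdef]
          show G.Adj (g i.val) (g (i + 1).val)
          rw [hv, hin]
          exact hend.symm
      have hfwd : ∀ i j : ZMod (n + 1), i.val < j.val → G.Adj (f i) (f j) →
          (j = i + 1 ∨ i = j + 1) := by
        intro i j hlt hAdj
        rcases Nat.lt_or_ge (i.val + 1) j.val with h2 | h2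
        · -- j.val ≥ i.val + 2 : must be the wrap pair (0, n), else chord or dup contradiction
          by_cases h0n : i.val = 0 ∧ j.val = n
          · right
            apply ZMod.val_injective
            rw [ZMod.val_add, ZMod.val_one, h0n.2, h0n.1]
            simp
          · exfalso
            apply hch
            refine ⟨i.val, j.val, by omega, hvle j, ?_, ?_⟩
            · rcases not_and_or.1 h0n with h | h
              · exact Or.inl h
              · exact Or.inr h
            · rw [hfdef] at hAdj; exact hAdj
        · -- j.val = i.val + 1
          left
          apply ZMod.val_injective
          have hv : (i + 1).val = i.val + 1 := by
            rw [ZMod.val_add, ZMod.val_one]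
            exact Nat.mod_eq_of_lt (by have := hvle j; omega)
          rw [hv]; omega
      have hiff : ∀ i j : ZMod (n + 1), G.Adj (f i) (f j) ↔ (j = i + 1 ∨ i = j + 1) := by
        intro i j
        constructor
        · intro hAdj
          rcases lt_trichotomy i.val j.val with h | h | h
          · exact hfwd i j h hAdj
          · exact absurd (hfdef ▸ hAdj) (by rw [ZMod.val_injective _ h]; exact G.irrefl)
          · rcases hfwd j i h hAdj.symm with h' | h'
            · exact Or.inr h'
            · exact Or.inl h'
        · rintro (rfl | rfl)
          · exact hconsec i
          · exact (hconsec j).symm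
      have hic : IsInducedCycle G f := ⟨by omega, hinj, hiff⟩
      have hmc := hcyc (n + 1) f hic ((n : ZMod (n + 1)))
      have hcast : ((n : ZMod (n + 1)) + 1) = 0 := ZMod.natCast_self' n
      have hfn : f ((n : ZMod (n + 1))) = g n := hfg n le_rfl
      have hf0 : f 0 = g 0 := by
        rw [hfdef]
        show g ((0 : ZMod (n + 1)).val) = g 0
        rw [ZMod.val_zero]
      rw [hcast, hfn, hf0] at hmc
      simp only [bind_pure_comp, List.map_eq_map, List.map_map] at hmc
      rw [(hG _ _ hend).2.2]
      refine le_trans hmc (le_of_eq ?_)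
      congr 1
      rw [show n + 1 - 1 = n by omega]
      apply List.map_congr_left
      intro k hk
      have hk' := List.mem_range.1 hk
      show δ (f (0 + (k : ZMod (n + 1)))) (f (0 + (k : ZMod (n + 1)) + 1)) = T k
      rw [zero_add, show ((k : ZMod (n + 1)) + 1) = ((k + 1 : ℕ) : ZMod (n + 1)) by push_cast; ring,
        hfg k (by omega), hfg (k + 1) (by omega)]

end KeyLemma
/-- A regular `R`-graph is metric iff every cycle of it is metric. -/
theorem regular_metric_iff_cycles_metric (R : Set ℝ) (hne : R.Nonempty)
    (hcl : IsClosed R) (hpos : ∀ x ∈ R, 0 ≤ x) (h4 : FourValues R)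
    {V : Type} (G : SimpleGraph V) (δ : V → V → ℝ)
    (hG : IsRGraph R G δ) (hreg : RegularRGraph R G δ) :
    MetricRGraph R G δ ↔
      ∀ (n : ℕ) (f : ZMod n → V), IsInducedCycle G f → MetricCycle R δ f := by
  constructor
  · intro hmet n f hic i
    obtain ⟨hn3, hinj, hadjiff⟩ := hic
    have hadj1 : G.Adj (f i) (f (i + 1)) := (hadjiff i (i + 1)).mpr (Or.inl rfl)
    set g : ℕ → V := fun k => f (i + 1 + (k : ZMod n)) with hgdef
    have hchain : ∀ k, k < n - 1 → G.Adj (g k) (g (k + 1)) := by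
      intro k _
      show G.Adj (f (i + 1 + (k : ZMod n))) (f (i + 1 + ((k + 1 : ℕ) : ZMod n)))
      exact (hadjiff _ _).mpr (Or.inl (by push_cast; ring))
    obtain ⟨w, hw⟩ := exists_walk δ (n - 1) g hchain
    have hg0 : g 0 = f (i + 1) := by
      show f (i + 1 + ((0 : ℕ) : ZMod n)) = f (i + 1)
      norm_num
    have hgm : g (n - 1) = f i := by
      show f (i + 1 + ((n - 1 : ℕ) : ZMod n)) = f i
      have h1 : ((1 : ZMod n) + ((n - 1 : ℕ) : ZMod n)) = 0 := by
        have h2 : ((1 + (n - 1) : ℕ) : ZMod n) = 0 := by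
          rw [show 1 + (n - 1) = n by omega, ZMod.natCast_self]
        rw [← h2]; push_cast; ring
      rw [add_assoc, h1, add_zero]
    have hsym : δ (f i) (f (i + 1)) = δ (f (i + 1)) (f i) := (hG _ _ hadj1).2.2
    simp only [bind_pure_comp, List.map_eq_map, List.map_map]
    rw [hsym, hmet _ _ hadj1.symm]
    have hbdd := gdist_bddBelow hpos hG (f (i + 1)) (f i)
    refine le_trans (csInf_le hbdd ⟨w.copy hg0 hgm, rfl⟩) (le_of_eq ?_)
    rw [walkDelta, SimpleGraph.Walk.darts_copy, hw]
    congr 1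
    apply List.map_congr_left
    intro k _
    show δ (g k) (g (k + 1)) = δ (f (i + 1 + (k : ZMod n))) (f (i + 1 + (k : ZMod n) + 1))
    show δ (f (i + 1 + (k : ZMod n))) (f (i + 1 + ((k + 1 : ℕ) : ZMod n))) = _
    congr 2
    push_cast
    ring
  · intro hcyc a b hab
    apply le_antisymm
    · refine le_csInf ⟨_, SimpleGraph.Walk.cons hab SimpleGraph.Walk.nil, rfl⟩ ?_
      rintro x ⟨w, rfl⟩
      rw [walkDelta, walk_darts_eq]
      have hkey := key_chain hcl hpos h4 hG hcyc w.length w.getVert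
        (fun k hk => w.adj_getVert_succ hk)
        (by rw [SimpleGraph.Walk.getVert_zero, SimpleGraph.Walk.getVert_length]; exact hab)
      rw [SimpleGraph.Walk.getVert_zero, SimpleGraph.Walk.getVert_length] at hkey
      exact hkey
    · exact csInf_le (gdist_bddBelow hpos hG a b)
        ⟨_, (walkDelta_single hab).symm⟩
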